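/- For every graph G and every positive integer α, ecrw_1(G) ≤ secw(G) − 1, where secw denotes super edge-cut width; in particular secw is an upper bound (up to a function) for every ecrw_α. -/

import Mathlib

open SimpleGraph

universe u

/-- A tree-cut decomposition of a graph `G`: a finite tree `T` together with
pairwise disjoint (possibly empty) bags covering the vertex set of `G`. -/
structure TreeCutDecomp {V : Type u} (G : SimpleGraph V) where
  β : Type
  fintypeβ : Fintype β
  T : SimpleGraph β
  isTree : T.IsTree
  bag : β → Set V
  disj : Pairwise fun s t => Disjoint (bag s) (bag t)
  covers : ∀ v : V, ∃ t, v ∈ bag t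

namespace TreeCutDecomp

variable {V : Type u} {G : SimpleGraph V}

/-- The edge `e` of `G` crosses the bag at node `t`: its endpoints lie in bag-unions of
two distinct components of `T - t`. -/
def Crosses (D : TreeCutDecomp G) (t : D.β) (e : Sym2 V) : Prop :=
  e ∈ G.edgeSet ∧ ∃ (u v : V) (s₁ s₂ : D.β) (h₁ : s₁ ≠ t) (h₂ : s₂ ≠ t),
    e = s(u, v) ∧ u ∈ D.bag s₁ ∧ v ∈ D.bag s₂ ∧
    ¬ (D.T.induce {x | x ≠ t}).Reachable ⟨s₁, h₁⟩ ⟨s₂, h₂⟩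

/-- The number of edges crossing the bag at node `t`. -/
noncomputable def crossNum (D : TreeCutDecomp G) (t : D.β) : ℕ :=
  {e : Sym2 V | D.Crosses t e}.ncard

/-- The crossing number of the decomposition is at most `k`. -/
def CrossLE (D : TreeCutDecomp G) (k : ℕ) : Prop := ∀ t, D.crossNum t ≤ k

/-- The thickness (maximum bag size) of the decomposition is at most `a`. -/
def ThickLE (D : TreeCutDecomp G) (a : ℕ) : Prop := ∀ t, (D.bag t).ncard ≤ a

end TreeCutDecomp

/-- The `α`-edge-crossing width: minimum crossing number over tree-cut decompositions
of thickness at most `α`. -/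
noncomputable def ecrwA {V : Type u} (G : SimpleGraph V) (a : ℕ) : ℕ :=
  sInf {k | ∃ D : TreeCutDecomp G, D.ThickLE a ∧ D.CrossLE k}

/-- The edge-crossing width: minimum over tree-cut decompositions of the maximum of the
thickness and the crossing number. -/
noncomputable def ecrw {V : Type u} (G : SimpleGraph V) : ℕ :=
  sInf {k | ∃ D : TreeCutDecomp G, D.ThickLE k ∧ D.CrossLE k}

/-- `F` is a maximal spanning forest of `H`: a subforest with the same reachability
relation (so adding any further edge of `H` would create a cycle). -/
def IsMaxSpanningForest {W : Type*} (H F : SimpleGraph W) : Prop :=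
  F ≤ H ∧ F.IsAcyclic ∧ ∀ u v : W, H.Reachable u v ↔ F.Reachable u v

/-- `v` lies on the unique path of the forest `F` between `u` and `w`. -/
def OnForestPath {W : Type*} (F : SimpleGraph W) (v u w : W) : Prop :=
  F.Reachable u w ∧ (v = u ∨ v = w ∨ ∃ (hu : u ≠ v) (hw : w ≠ v),
    ¬ (F.induce {x | x ≠ v}).Reachable ⟨u, hu⟩ ⟨w, hw⟩)

/-- The size of the local feedback edge set at `v` for the pair `(H, F)`:
the number of edges of `H` outside `F` whose unique `F`-path passes through `v`. -/
noncomputable def localFES {W : Type*} (H F : SimpleGraph W) (v : W) : ℕ :=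
  {e : Sym2 W | e ∈ H.edgeSet ∧ e ∉ F.edgeSet ∧
    ∃ u w, e = s(u, w) ∧ OnForestPath F v u w}.ncard

/-- The super edge-cut width of `G`: the minimum, over supergraphs `H` of `G` and
maximal spanning forests `F` of `H`, of `1 + max_v |E_loc(v)|`. -/
noncomputable def secw {V : Type u} [Fintype V] (G : SimpleGraph V) : ℕ :=
  sInf {m | ∃ (W : Type) (_ : Fintype W) (H : SimpleGraph W) (f : V ↪ W)
    (F : SimpleGraph W), (∀ u v : V, G.Adj u v → H.Adj (f u) (f v)) ∧
    IsMaxSpanningForest H F ∧ ∀ w : W, localFES H F w + 1 ≤ m}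

/-!
Extend a maximal spanning forest `F` of a supergraph `H ⊇ f(G)` to a spanning tree `T` and use
`T` as a tree-cut decomposition whose bags are the fibres of `f`, so all bags have size at most
one. If an edge `uv` of `G` crosses a node `t`, then `f u` and `f v` lie in different components
of `T - t`, hence (as `F ≤ T`) of `F - t`; they are not `F`-adjacent but are `F`-connected, since
`H`-adjacent. So `f(uv)` is an `H`-edge outside `F` whose `F`-path runs through `t`, i.e. it is
in the local feedback edge set at `t`.
-/

def localFeedbackEdges {W : Type*} (H F : SimpleGraph W) (v : W) : Set (Sym2 W) :=
  {e | e ∈ H.edgeSet ∧ e ∉ F.edgeSet ∧ ∃ u w, e = s(u, w) ∧ OnForestPath F v u w}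

lemma localFES_eq_ncard {W : Type*} (H F : SimpleGraph W) (v : W) :
    localFES H F v = (localFeedbackEdges H F v).ncard := rfl

lemma localFES_le_card {W : Type*} [Finite W] (H F : SimpleGraph W) (v : W) :
    localFES H F v ≤ Nat.card (Sym2 W) :=
  Set.ncard_le_card _

lemma exists_isMaxSpanningForest {W : Type*} (H : SimpleGraph W) :
    ∃ F, IsMaxSpanningForest H F := by
  obtain ⟨F, hFH, hF, hreach⟩ := H.exists_isAcyclic_reachable_eq_le
  exact ⟨F, hFH, hF, fun u v => by rw [hreach]⟩

namespace TreeCutDecomp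

variable {V : Type u}

def single (G : SimpleGraph V) : TreeCutDecomp G where
  β := Unit
  fintypeβ := inferInstance
  T := ⊥
  isTree := .of_subsingleton
  bag _ := Set.univ
  disj s t hst := absurd (Subsingleton.elim s t) hst
  covers _ := ⟨(), trivial⟩

lemma thickLE_single (G : SimpleGraph V) : (single G).ThickLE (Nat.card V) :=
  fun _ => (Set.ncard_univ V).le

lemma crossNum_single (G : SimpleGraph V) (t : Unit) : (single G).crossNum t = 0 := by
  have hno : {e | (single G).Crosses t e} = ∅ :=
    Set.eq_empty_of_forall_notMem fun _ ⟨_, _, _, s₁, _, h₁, _⟩ =>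
      h₁ (Subsingleton.elim (α := Unit) s₁ t)
  unfold crossNum
  rw [hno, Set.ncard_empty]

variable {W : Type} [Fintype W] {T : SimpleGraph W}

def ofEmbedding (G : SimpleGraph V) (hT : T.IsTree) (f : V ↪ W) : TreeCutDecomp G where
  β := W
  fintypeβ := inferInstance
  T := T
  isTree := hT
  bag w := {v | f v = w}
  disj _ _ hst := Set.disjoint_left.mpr fun _ h₁ h₂ => hst (h₁.symm.trans h₂)
  covers v := ⟨f v, rfl⟩

lemma thickLE_one_ofEmbedding (G : SimpleGraph V) (hT : T.IsTree) (f : V ↪ W) :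
    (ofEmbedding G hT f).ThickLE 1 := fun _ =>
  have hfibre : Set.Subsingleton {v | f v = _} := fun _ hx _ hy => f.injective (hx.trans hy.symm)
  (Set.ncard_le_one hfibre.finite).mpr hfibre

variable {G : SimpleGraph V} {H F : SimpleGraph W} {f : V ↪ W}

lemma map_mem_localFeedbackEdges_of_crosses (hT : T.IsTree)
    (hGH : ∀ u v, G.Adj u v → H.Adj (f u) (f v)) (hF : IsMaxSpanningForest H F) (hFT : F ≤ T)
    {t : W} {e : Sym2 V} (he : (ofEmbedding G hT f).Crosses t e) :
    e.map f ∈ localFeedbackEdges H F t := by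
  obtain ⟨huv, u, v, _, _, hu, hv, rfl, rfl, rfl, hsep⟩ := he
  have hH : H.Adj (f u) (f v) := hGH u v huv
  have hnotF : ¬ F.Adj (f u) (f v) := fun hFuv =>
    hsep (show (T.induce _).Adj ⟨f u, hu⟩ ⟨f v, hv⟩ from hFT hFuv).reachable
  have hsepF : ¬ (F.induce {x | x ≠ t}).Reachable ⟨f u, hu⟩ ⟨f v, hv⟩ := fun hreach =>
    hsep (hreach.mono fun _ _ hxy => hFT hxy)
  exact ⟨hH, hnotF, f u, f v, rfl, (hF.2.2 _ _).mp hH.reachable, .inr (.inr ⟨hu, hv, hsepF⟩)⟩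

lemma crossNum_ofEmbedding_le_localFES (hT : T.IsTree)
    (hGH : ∀ u v, G.Adj u v → H.Adj (f u) (f v)) (hF : IsMaxSpanningForest H F) (hFT : F ≤ T)
    (t : W) : (ofEmbedding G hT f).crossNum t ≤ localFES H F t := by
  unfold crossNum
  rw [localFES_eq_ncard, ← Set.ncard_image_of_injective _ (Sym2.map.injective f.injective)]
  refine Set.ncard_le_ncard ?_ (Set.toFinite _)
  rintro _ ⟨e, he, rfl⟩
  exact map_mem_localFeedbackEdges_of_crosses hT hGH hF hFT he

end TreeCutDecomp

open TreeCutDecomp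

lemma ecrwA_eq_zero_of_natCard_le {V : Type u} (G : SimpleGraph V) {a : ℕ}
    (ha : Nat.card V ≤ a) : ecrwA G a = 0 :=
  Nat.le_zero.mp <| Nat.sInf_le
    ⟨single G, fun t => (thickLE_single G t).trans ha, fun t => (crossNum_single G t).le⟩

def SecwLE {V : Type u} (G : SimpleGraph V) (m : ℕ) : Prop :=
  ∃ (W : Type) (_ : Fintype W) (H : SimpleGraph W) (f : V ↪ W) (F : SimpleGraph W),
    (∀ u v : V, G.Adj u v → H.Adj (f u) (f v)) ∧
    IsMaxSpanningForest H F ∧ ∀ w : W, localFES H F w + 1 ≤ m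

lemma secw_eq_sInf {V : Type u} [Fintype V] (G : SimpleGraph V) :
    secw G = sInf {m | SecwLE G m} := rfl

lemma exists_secwLE {V : Type u} [Finite V] (G : SimpleGraph V) : ∃ m, SecwLE G m := by
  obtain ⟨n, ⟨e⟩⟩ := Finite.exists_equiv_fin V
  obtain ⟨F, hF⟩ := exists_isMaxSpanningForest (G.map e.toEmbedding)
  exact ⟨Nat.card (Sym2 (Fin n)) + 1, Fin n, inferInstance, G.map e.toEmbedding, e.toEmbedding, F,
    fun _ _ huv => map_adj_apply.mpr huv, hF,
    fun w => Nat.add_le_add_right (localFES_le_card _ _ w) 1⟩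

lemma secwLE_secw {V : Type u} [Fintype V] (G : SimpleGraph V) : SecwLE G (secw G) := by
  rw [secw_eq_sInf]
  exact Nat.sInf_mem (s := {m | SecwLE G m}) (exists_secwLE G)

lemma ecrwA_le_of_secwLE {V : Type u} [Nonempty V] {G : SimpleGraph V} {a m : ℕ} (ha : 0 < a)
    (h : SecwLE G m) : ecrwA G a ≤ m - 1 := by
  obtain ⟨W, _, H, f, F, hGH, hF, hm⟩ := h
  have : Nonempty W := .map f ‹_›
  obtain ⟨T, hFT, -, hT⟩ := connected_top.exists_isTree_le_of_le_of_isAcyclic le_top hF.2.1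
  refine Nat.sInf_le ⟨ofEmbedding G hT f, fun t => (thickLE_one_ofEmbedding G hT f t).trans ha,
    fun t => ?_⟩
  have := crossNum_ofEmbedding_le_localFES hT hGH hF hFT t
  have := hm t
  omega

lemma ecrwA_le_secw_sub_one {V : Type u} [Fintype V] (G : SimpleGraph V) {a : ℕ} (ha : 0 < a) :
    ecrwA G a ≤ secw G - 1 := by
  rcases isEmpty_or_nonempty V with hV | hV
  · rw [ecrwA_eq_zero_of_natCard_le G (by simp)]
    exact Nat.zero_le _
  · exact ecrwA_le_of_secwLE ha (secwLE_secw G)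

/-- For every graph `G` and every positive integer `α`, `ecrw_1(G) ≤ secw(G) − 1`;
in particular, `ecrw_α(G) ≤ secw(G) − 1`, so super edge-cut width is an upper bound
for every `α`-edge-crossing width. -/
theorem stmt_12 {V : Type u} [Fintype V] (G : SimpleGraph V) (α : ℕ) (hα : 0 < α) :
    ecrwA G 1 ≤ secw G - 1 ∧ ecrwA G α ≤ secw G - 1 :=
  ⟨ecrwA_le_secw_sub_one G one_pos, ecrwA_le_secw_sub_one G hα⟩
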